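/- arXiv:2312.02962 — 3 statements merged into one kernel-verified Lean document; each statement's English description precedes it below -/
import Mathlib

section
/- If S is a set of 2^k pairwise-distinct subsets of a k-element character set C (i.e., S is the full power set of C), then in any rooted binary tree T whose leaves are in bijection with S, some character c ∈ C has at least 2^k/(3k) first-appearance vertices under the Fitch labeling, where the Fitch labeling assigns c to v iff all leaves below v possess c. -/
/-!
For every nonempty `A ⊆ C`, walk up from the leaf labelled `A`. The Fitch label can only shrink
along the way, and it is `∅` at the root because the leaf labelled `∅` lies below it. The last
vertex of the path whose label is still `A` is a first appearance of every character it loses at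
its parent. Distinct sets `A` give vertices with distinct labels, so at least `2^k - 1` vertices
are first appearances, and pigeonhole over the `k` characters leaves one with at least
`(2^k - 1)/k ≥ 2^k/(3k)` of them.
-/

open Finset

theorem Nat.exists_apply_eq_apply_zero_and_apply_succ_ne {α : Type*} {f : ℕ → α} {m : ℕ}
    (hm : f m ≠ f 0) : ∃ n, f n = f 0 ∧ f (n + 1) ≠ f 0 := by
  induction m with
  | zero => exact absurd rfl hm
  | succ m ih =>
    by_cases h : f m = f 0
    · exact ⟨m, h, hm⟩
    · exact ih h

theorem Finset.card_filter_nonempty (ι : Type*) [Fintype ι] [DecidableEq ι] :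
    #(univ.filter fun A : Finset ι => A.Nonempty) = 2 ^ Fintype.card ι - 1 := by
  simp only [Finset.nonempty_iff_ne_empty, filter_ne', card_erase_of_mem (mem_univ _),
    card_univ, Fintype.card_finset]

namespace FitchLabeling

variable {V ι : Type*} (parent : V → V) (leaf : V → Prop) (σ : V → Finset ι)

def fitchLabel (v : V) : Set ι :=
  {c | ∀ x, leaf x → (∃ n, parent^[n] x = v) → c ∈ σ x}

def IsFirstAppearance (r : V) (c : ι) (v : V) : Prop :=
  c ∈ fitchLabel parent leaf σ v ∧ (v = r ∨ c ∉ fitchLabel parent leaf σ (parent v))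

variable {parent leaf σ}

theorem fitchLabel_parent_subset (v : V) :
    fitchLabel parent leaf σ (parent v) ⊆ fitchLabel parent leaf σ v :=
  fun _ hc x hx ⟨n, hn⟩ => hc x hx ⟨n + 1, by rw [Function.iterate_succ_apply', hn]⟩

theorem fitchLabel_eq_empty {z v : V} (hz : leaf z) (hσz : σ z = ∅)
    (hzv : ∃ n, parent^[n] z = v) : fitchLabel parent leaf σ v = ∅ :=
  Set.eq_empty_of_forall_notMem fun c hc => by simpa [hσz] using hc z hz hzv

theorem eq_of_iterate_eq_of_forall_ne_parent {r x y : V} (hroot : parent r = r)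
    (hx : ∀ w, ¬ (w ≠ r ∧ parent w = x)) {n : ℕ} (h : parent^[n] y = x) : y = x := by
  induction n generalizing y with
  | zero => exact h
  | succ n ih =>
    have hpy : parent y = x := ih h
    by_contra hyx
    have hyr : y = r := by_contra fun hyr => hx y ⟨hyr, hpy⟩
    exact hyx (by rw [← hpy, hyr, hroot])

theorem fitchLabel_leaf {r x : V} (hroot : parent r = r) (hx : leaf x)
    (hxc : ∀ w, ¬ (w ≠ r ∧ parent w = x)) : fitchLabel parent leaf σ x = σ x := by
  refine Set.Subset.antisymm (fun _ hc => hc x hx ⟨0, rfl⟩) fun c hc y _ ⟨_, hy⟩ => ?_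
  rwa [eq_of_iterate_eq_of_forall_ne_parent hroot hxc hy]

theorem exists_isFirstAppearance_fitchLabel_eq (r x : V) {m : ℕ}
    (hm : fitchLabel parent leaf σ (parent^[m] x) ≠ fitchLabel parent leaf σ x) :
    ∃ v c, fitchLabel parent leaf σ v = fitchLabel parent leaf σ x ∧
      IsFirstAppearance parent leaf σ r c v := by
  obtain ⟨n, hn, hn'⟩ := Nat.exists_apply_eq_apply_zero_and_apply_succ_ne
    (f := fun n => fitchLabel parent leaf σ (parent^[n] x)) hm
  simp only [Function.iterate_succ_apply', Function.iterate_zero_apply] at hn hn'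
  obtain ⟨c, hc, hc'⟩ := Set.exists_of_ssubset
    ((fitchLabel_parent_subset _).ssubset_of_ne (hn ▸ hn'))
  exact ⟨_, c, hn, hc, Or.inr hc'⟩

open scoped Classical in
theorem two_pow_sub_one_le_card_isFirstAppearance [Fintype V] [Fintype ι] {r : V}
    (hroot : parent r = r) (htree : ∀ v, ∃ n, parent^[n] v = r)
    (hleaf : ∀ x, leaf x → ∀ w, ¬ (w ≠ r ∧ parent w = x))
    (hsurj : ∀ A : Finset ι, ∃ x, leaf x ∧ σ x = A) :
    2 ^ Fintype.card ι - 1 ≤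
      #(univ.filter fun v => ∃ c, IsFirstAppearance parent leaf σ r c v) := by
  obtain ⟨z, hz, hσz⟩ := hsurj ∅
  have hfirst (A : Finset ι) (hA : A.Nonempty) :
      ∃ v, fitchLabel parent leaf σ v = A ∧ ∃ c, IsFirstAppearance parent leaf σ r c v := by
    obtain ⟨x, hx, rfl⟩ := hsurj A
    obtain ⟨m, hm⟩ := htree x
    have hlabel := fitchLabel_leaf (σ := σ) hroot hx (hleaf x hx)
    obtain ⟨v, c, hv, hc⟩ := exists_isFirstAppearance_fitchLabel_eq r x (m := m) (by
      rw [hm, fitchLabel_eq_empty hz hσz (htree z), hlabel]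
      exact (Set.nonempty_iff_ne_empty.1 (by exact_mod_cast hA)).symm)
    exact ⟨v, hv.trans hlabel, c, hc⟩
  have : Nonempty V := ⟨r⟩
  choose! f hf using hfirst
  rw [← card_filter_nonempty]
  refine card_le_card_of_injOn f (fun A hA => ?_) (fun A hA B hB hAB => ?_)
  · simpa using (hf A (by simpa using hA)).2
  · have := (hf A (by simpa using hA)).1
    rw [hAB, (hf B (by simpa using hB)).1] at this
    exact_mod_cast this.symm

open scoped Classical in
theorem two_pow_sub_one_le_sum_card_isFirstAppearance [Fintype V] [Fintype ι] {r : V}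
    (hroot : parent r = r) (htree : ∀ v, ∃ n, parent^[n] v = r)
    (hleaf : ∀ x, leaf x → ∀ w, ¬ (w ≠ r ∧ parent w = x))
    (hsurj : ∀ A : Finset ι, ∃ x, leaf x ∧ σ x = A) :
    2 ^ Fintype.card ι - 1 ≤ ∑ c, Nat.card {v // IsFirstAppearance parent leaf σ r c v} :=
  calc
  _ ≤ #(univ.filter fun v => ∃ c, IsFirstAppearance parent leaf σ r c v) :=
    two_pow_sub_one_le_card_isFirstAppearance hroot htree hleaf hsurj
  _ = #(univ.biUnion fun c => univ.filter (IsFirstAppearance parent leaf σ r c)) := by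
    congr 1; ext v; simp
  _ ≤ _ := card_biUnion_le.trans_eq <| by simp [Nat.card_eq_fintype_card, Fintype.card_subtype]

theorem exists_card_isFirstAppearance_ge [Fintype V] [Fintype ι] [Nonempty ι] {r : V}
    (hroot : parent r = r) (htree : ∀ v, ∃ n, parent^[n] v = r)
    (hleaf : ∀ x, leaf x → ∀ w, ¬ (w ≠ r ∧ parent w = x))
    (hsurj : ∀ A : Finset ι, ∃ x, leaf x ∧ σ x = A) :
    ∃ c, ((2 ^ Fintype.card ι - 1 : ℕ) : ℝ) / Fintype.card ι ≤
      Nat.card {v // IsFirstAppearance parent leaf σ r c v} := by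
  obtain ⟨c, -, hc⟩ := exists_le_of_sum_le univ_nonempty (f := fun _ =>
    ((2 ^ Fintype.card ι - 1 : ℕ) : ℝ) / Fintype.card ι) (g := fun c =>
    (Nat.card {v // IsFirstAppearance parent leaf σ r c v} : ℝ)) <| by
    rw [sum_const, card_univ, nsmul_eq_mul, mul_div_cancel₀ _ (by positivity)]
    exact_mod_cast two_pow_sub_one_le_sum_card_isFirstAppearance hroot htree hleaf hsurj
  exact ⟨c, hc⟩

end FitchLabeling

theorem stmt12_general {V : Type*} [Fintype V] (k : ℕ) (hk : 1 ≤ k)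
    (r : V) (parent : V → V) (hroot : parent r = r)
    (htree : ∀ v, ∃ n, parent^[n] v = r)
    (leaf : V → Prop) (hleaf : ∀ v, leaf v ↔ ∀ w, ¬ (w ≠ r ∧ parent w = v))
    (σ : V → Finset (Fin k))
    (hbij : ∀ A : Finset (Fin k), ∃! x, leaf x ∧ σ x = A) :
    ∃ c : Fin k,
      (2 : ℝ) ^ k / (3 * k) ≤
        (Nat.card {v : V //
          (∀ x, leaf x → (∃ n, parent^[n] x = v) → c ∈ σ x) ∧
          (v = r ∨ ¬ ∀ x, leaf x → (∃ n, parent^[n] x = parent v) → c ∈ σ x)} : ℝ) := by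
  have : Nonempty (Fin k) := ⟨⟨0, hk⟩⟩
  obtain ⟨c, hc⟩ := FitchLabeling.exists_card_isFirstAppearance_ge (σ := σ) hroot htree
    (fun x => (hleaf x).1) (fun A => (hbij A).exists)
  refine ⟨c, le_trans ?_ hc⟩
  have h2k : (2 : ℝ) ≤ 2 ^ k := by simpa using pow_le_pow_right₀ one_le_two hk
  rw [Fintype.card_fin, Nat.cast_sub Nat.one_le_two_pow,
    div_le_div_iff₀ (by positivity) (by positivity)]
  push_cast
  nlinarith

/-- If the taxa set is the full power set of a `k`-element character set, then in any
rooted binary tree whose leaves are in bijection with the taxa, some character has at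
least `2^k/(3k)` first-appearance vertices under the Fitch labeling (which assigns a
character to a vertex iff all leaves below it possess the character). -/
theorem stmt12 {V : Type*} [Fintype V] (k : ℕ) (hk : 1 ≤ k)
    (r : V) (parent : V → V) (hroot : parent r = r)
    (htree : ∀ v, ∃ n, parent^[n] v = r)
    (leaf : V → Prop) (hleaf : ∀ v, leaf v ↔ ∀ w, ¬ (w ≠ r ∧ parent w = v))
    (hbin : ∀ v, ¬ leaf v →
      ∃ x y : V, x ≠ y ∧ ∀ w, (w ≠ r ∧ parent w = v) ↔ (w = x ∨ w = y))
    (σ : V → Finset (Fin k))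
    (hbij : ∀ A : Finset (Fin k), ∃! x, leaf x ∧ σ x = A) :
    ∃ c : Fin k,
      (2 : ℝ) ^ k / (3 * k) ≤
        (Nat.card {v : V //
          (∀ x, leaf x → (∃ n, parent^[n] x = v) → c ∈ σ x) ∧
          (v = r ∨ ¬ ∀ x, leaf x → (∃ n, parent^[n] x = parent v) → c ∈ σ x)} : ℝ) :=
  stmt12_general k hk r parent hroot htree leaf hleaf σ hbij
end

section
/- Let T be a rooted binary tree with leaves labeled by pairwise distinct subsets of C, with Fitch labeling λ. Suppose x and y are non-cherry leaves, neither of which is a first-appearance vertex of any character, such that the parent p_y of y is a strict descendant of the parent p_x of x and no other 'marked' parent lies strictly between them. Then x ⊆ y (as character sets), x ≠ y, and for any character c ∈ y \ x there exists a first-appearance vertex z for c with p_y ≼ z ≺ p_x (z is an ancestor of p_y and a strict descendant of p_x). -/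
/-!
Since `x` is not a first appearance, each character of `x` survives to `λ(p_x)`, so every leaf
below `p_x`, in particular `y`, carries it; distinct leaves have distinct labels, hence
`x ⊊ y`. A character `c ∈ y \ x` lies in `λ(p_y)` (as `y` is not a first appearance) but not in
`λ(p_x)` (as `x` lacks it), so walking up from `p_y` to `p_x` it drops out of the Fitch label
at some step; the vertex just below that step is a first appearance of `c`.
-/

theorem Function.exists_iterate_boundary {α : Type*} (f : α → α) {P : α → Prop} {a : α}
    (h₀ : P a) {n : ℕ} (hn : ¬ P (f^[n] a)) :
    ∃ k < n, P (f^[k] a) ∧ ¬ P (f^[k + 1] a) := by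
  induction n with
  | zero => exact absurd h₀ hn
  | succ m ih =>
    by_cases hm : P (f^[m] a)
    · exact ⟨m, m.lt_succ_self, hm, hn⟩
    · obtain ⟨k, hk, hPk, hPk'⟩ := ih hm
      exact ⟨k, hk.trans m.lt_succ_self, hPk, hPk'⟩

namespace RootedTree

variable {V C : Type*} {r : V} {parent : V → V} {leaf : V → Prop}

theorem leaf_ne_root_of_strict_descendant (hroot : parent r = r)
    (hleaf : ∀ v, leaf v ↔ ∀ w, ¬ (w ≠ r ∧ parent w = v))
    {x u : V} (hx : leaf x) {n : ℕ} (hn : parent^[n] u = parent x) (hu : u ≠ parent x) :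
    x ≠ r := by
  intro hxr
  rw [hxr] at hx
  rw [hxr, hroot] at hn hu
  obtain ⟨k, -, hk, hk'⟩ :=
    Function.exists_iterate_boundary parent (P := (· ≠ r)) hu (not_not.mpr hn)
  rw [Function.iterate_succ_apply'] at hk'
  exact (hleaf r).mp hx _ ⟨hk, not_not.mp hk'⟩

theorem eq_of_iterate_eq_leaf (hroot : parent r = r)
    (hleaf : ∀ v, leaf v ↔ ∀ w, ¬ (w ≠ r ∧ parent w = v))
    {v : V} (hv : leaf v) (hvr : v ≠ r) :
    ∀ {n : ℕ} {z : V}, parent^[n] z = v → z = v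
  | 0, _, h => h
  | n + 1, z, h => by
    rw [Function.iterate_succ_apply'] at h
    by_cases hw : parent^[n] z = r
    · rw [hw, hroot] at h
      exact absurd h.symm hvr
    · exact absurd ⟨hw, h⟩ ((hleaf v).mp hv _)

variable {σ lam : V → Set C}

theorem label_subset_fitch_of_leaf (hroot : parent r = r)
    (hleaf : ∀ v, leaf v ↔ ∀ w, ¬ (w ≠ r ∧ parent w = v))
    (hlam : ∀ v c, c ∈ lam v ↔ ∀ z, leaf z → (∃ n, parent^[n] z = v) → c ∈ σ z)
    {v : V} (hv : leaf v) (hvr : v ≠ r) : σ v ⊆ lam v := by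
  rintro c hc
  rw [hlam]
  rintro z - ⟨n, hn⟩
  rwa [eq_of_iterate_eq_leaf hroot hleaf hv hvr hn]

theorem label_subset_fitch_parent_of_not_firstAppearance (hroot : parent r = r)
    (hleaf : ∀ v, leaf v ↔ ∀ w, ¬ (w ≠ r ∧ parent w = v))
    (hlam : ∀ v c, c ∈ lam v ↔ ∀ z, leaf z → (∃ n, parent^[n] z = v) → c ∈ σ z)
    {FA : C → V → Prop}
    (hFA : ∀ c v, FA c v ↔ (c ∈ lam v ∧ (v = r ∨ c ∉ lam (parent v))))
    {v : V} (hv : leaf v) (hvr : v ≠ r) (hvFA : ∀ c, ¬ FA c v) : σ v ⊆ lam (parent v) := by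
  intro c hc
  by_contra hcp
  exact hvFA c
    ((hFA c v).mpr ⟨label_subset_fitch_of_leaf hroot hleaf hlam hv hvr hc, Or.inr hcp⟩)

theorem exists_firstAppearance_between
    {FA : C → V → Prop}
    (hFA : ∀ c v, FA c v ↔ (c ∈ lam v ∧ (v = r ∨ c ∉ lam (parent v))))
    {c : C} {u v : V} {n : ℕ} (hn : parent^[n] u = v) (hu : c ∈ lam u) (hv : c ∉ lam v) :
    ∃ z, FA c z ∧ (∃ k, parent^[k] u = z) ∧ (∃ k, parent^[k] z = v) ∧ z ≠ v := by
  obtain ⟨k, hk, hck, hck'⟩ := Function.exists_iterate_boundary parent (P := (c ∈ lam ·)) hu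
    (n := n) (by rwa [hn])
  rw [Function.iterate_succ_apply'] at hck'
  refine ⟨parent^[k] u, (hFA c _).mpr ⟨hck, Or.inr hck'⟩, ⟨k, rfl⟩, ⟨n - k, ?_⟩,
    fun h => hv (h ▸ hck)⟩
  rw [← Function.iterate_add_apply, Nat.sub_add_cancel hk.le, hn]

end RootedTree

open RootedTree in
theorem stmt14_general {V C : Type*} (r : V) (parent : V → V)
    (hroot : parent r = r)
    (leaf : V → Prop) (hleaf : ∀ v, leaf v ↔ ∀ w, ¬ (w ≠ r ∧ parent w = v))
    (σ : V → Set C)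
    (hdist : ∀ a b, leaf a → leaf b → a ≠ b → σ a ≠ σ b)
    (lam : V → Set C)
    (hlam : ∀ v c, c ∈ lam v ↔ ∀ z, leaf z → (∃ n, parent^[n] z = v) → c ∈ σ z)
    (FA : C → V → Prop)
    (hFA : ∀ c v, FA c v ↔ (c ∈ lam v ∧ (v = r ∨ c ∉ lam (parent v))))
    (x y : V) (hx : leaf x) (hy : leaf y)
    (hxFA : ∀ c, ¬ FA c x) (hyFA : ∀ c, ¬ FA c y)
    (hdesc : (∃ n, parent^[n] (parent y) = parent x) ∧ parent y ≠ parent x) :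
    σ x ⊆ σ y ∧ σ x ≠ σ y ∧
      ∀ c ∈ σ y, c ∉ σ x →
        ∃ z, FA c z ∧ (∃ n, parent^[n] (parent y) = z) ∧
          (∃ n, parent^[n] z = parent x) ∧ z ≠ parent x := by
  obtain ⟨⟨n, hn⟩, hyx⟩ := hdesc
  have hxr : x ≠ r := leaf_ne_root_of_strict_descendant hroot hleaf hx hn hyx
  have hyr : y ≠ r := by
    rintro rfl
    exact hyx (by rw [← hn, hroot, Function.iterate_fixed hroot])
  have hxy : x ≠ y := fun h => hyx (h ▸ rfl)
  refine ⟨fun c hc => ?_, hdist x y hx hy hxy, fun c hcy hcx => ?_⟩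
  · have hcpx : c ∈ lam (parent x) :=
      label_subset_fitch_parent_of_not_firstAppearance hroot hleaf hlam hFA hx hxr hxFA hc
    exact (hlam _ c).mp hcpx y hy ⟨n + 1, hn⟩
  · exact exists_firstAppearance_between hFA hn
      (label_subset_fitch_parent_of_not_firstAppearance hroot hleaf hlam hFA hy hyr hyFA hcy)
      fun h => hcx ((hlam _ c).mp h x hx ⟨1, rfl⟩)

/-- Marked-nodes lemma for the transfer lower bound. Let `T` be a rooted tree with
leaves labeled by pairwise distinct character sets and Fitch labeling `lam`, and
first-appearance predicate `FA`. If `x, y` are non-cherry leaves, neither of which is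
a first-appearance of any character, `parent y` is a strict descendant of `parent x`,
and no other marked node lies strictly between them, then `σ x ⊆ σ y`, `σ x ≠ σ y`,
and for every character `c ∈ σ y \ σ x` there is a first-appearance vertex `z` for `c`
with `parent y ≼ z ≺ parent x`. -/
theorem stmt14 {V C : Type*} [Fintype V] (r : V) (parent : V → V)
    (hroot : parent r = r) (htree : ∀ v, ∃ n, parent^[n] v = r)
    (leaf : V → Prop) (hleaf : ∀ v, leaf v ↔ ∀ w, ¬ (w ≠ r ∧ parent w = v))
    (σ : V → Set C)
    (hdist : ∀ a b, leaf a → leaf b → a ≠ b → σ a ≠ σ b)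
    (lam : V → Set C)
    (hlam : ∀ v c, c ∈ lam v ↔ ∀ z, leaf z → (∃ n, parent^[n] z = v) → c ∈ σ z)
    (FA : C → V → Prop)
    (hFA : ∀ c v, FA c v ↔ (c ∈ lam v ∧ (v = r ∨ c ∉ lam (parent v))))
    (x y : V) (hx : leaf x) (hy : leaf y)
    (hxnc : ∀ z, leaf z → z ≠ x → parent z ≠ parent x)
    (hync : ∀ z, leaf z → z ≠ y → parent z ≠ parent y)
    (hxFA : ∀ c, ¬ FA c x) (hyFA : ∀ c, ¬ FA c y)
    (hdesc : (∃ n, parent^[n] (parent y) = parent x) ∧ parent y ≠ parent x)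
    (hbetween : ∀ m,
      (∃ z, leaf z ∧ (∀ w, leaf w → w ≠ z → parent w ≠ parent z) ∧
        (∀ c, ¬ FA c z) ∧ parent z = m) →
      (∃ n, parent^[n] m = parent x) → (∃ n, parent^[n] (parent y) = m) →
      m = parent x ∨ m = parent y) :
    σ x ⊆ σ y ∧ σ x ≠ σ y ∧
      ∀ c ∈ σ y, c ∉ σ x →
        ∃ z, FA c z ∧ (∃ n, parent^[n] (parent y) = z) ∧
          (∃ n, parent^[n] z = parent x) ∧ z ≠ parent x :=
  stmt14_general r parent hroot leaf hleaf σ hdist lam hlam FA hFA x y hx hy hxFA hyFA hdesc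
end

section
/- Let T be a finite rooted tree with root r and let l be a labeling of the vertices by subsets of C such that (a) for every character c, the set V_c of vertices possessing c is nonempty and connected in T with a unique vertex of in-degree 0 in T[V_c], and (b) for every c, either V_c = V(T) or the complement of V_c is connected in T and contains r. Then l is a no-loss labeling: for every edge (u,v) of T, l(u) ⊆ l(v). -/
/-!
If `c ∈ l (parent v)` but `c ∉ l v`, then `V_c` is not everything, so by (b) the root is joined
to `v` by a walk avoiding `V_c`. Such a walk starts at `v` and can never step up from `v` to
`parent v ∈ V_c`, so it stays among the descendants of `v`. Hence the root is a descendant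
of `v`, which forces `v` to be the root.
-/

theorem exists_iterate_eq_of_reflTransGen {V : Type*} {parent : V → V} {R : V → V → Prop}
    {v b : V} (hR : ∀ x y, R x y → parent y = x ∨ (parent x = y ∧ x ≠ v))
    (h : Relation.ReflTransGen R v b) : ∃ n, parent^[n] b = v := by
  induction h with
  | refl => exact ⟨0, rfl⟩
  | @tail x y _ hxy ih =>
    obtain ⟨n, hn⟩ := ih
    rcases hR x y hxy with hchild | ⟨hparent, hxv⟩
    · exact ⟨n + 1, by rw [Function.iterate_succ_apply, hchild, hn]⟩
    · rcases n with _ | m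
      · exact absurd hn hxv
      · exact ⟨m, by rw [← hparent, ← Function.iterate_succ_apply, hn]⟩

theorem stmt19_general {V C : Type*} (r : V) (parent : V → V)
    (hroot : parent r = r)
    (l : V → Set C)
    (hb : ∀ c : C,
      (∀ v, c ∈ l v) ∨
      (c ∉ l r ∧
        ∀ a b : V, c ∉ l a → c ∉ l b →
          Relation.ReflTransGen
            (fun x y => c ∉ l x ∧ c ∉ l y ∧
              ((y ≠ r ∧ parent y = x) ∨ (x ≠ r ∧ parent x = y))) a b)) :
    ∀ v, v ≠ r → l (parent v) ⊆ l v := by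
  intro v hv c hc
  by_contra hcv
  rcases hb c with hall | ⟨hr, hconn⟩
  · exact hcv (hall v)
  have hsteps : ∀ x y, (c ∉ l x ∧ c ∉ l y ∧
      ((y ≠ r ∧ parent y = x) ∨ (x ≠ r ∧ parent x = y))) →
      parent y = x ∨ (parent x = y ∧ x ≠ v) := by
    rintro x y ⟨-, hy, ⟨-, hchild⟩ | ⟨-, hparent⟩⟩
    · exact .inl hchild
    · exact .inr ⟨hparent, by rintro rfl; exact hy (hparent ▸ hc)⟩
  obtain ⟨n, hn⟩ := exists_iterate_eq_of_reflTransGen hsteps (hconn v r hcv hr)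
  rw [Function.iterate_fixed hroot] at hn
  exact hv hn.symm

/-- Tree case of the equivalence theorem: in a finite rooted tree, if for every
character `c` (a) the presence set `V_c` is nonempty, connected in `T`, and has a
unique vertex of in-degree 0 in `T[V_c]`, and (b) either `V_c` is all of `V(T)` or its
complement is connected in `T` and contains the root, then the labeling is no-loss:
`l(u) ⊆ l(v)` along every edge `(u, v)`. -/
theorem stmt19 {V C : Type*} [Fintype V] (r : V) (parent : V → V)
    (hroot : parent r = r) (htree : ∀ v, ∃ n, parent^[n] v = r)
    (l : V → Set C)
    (ha : ∀ c : C,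
      (∃ v, c ∈ l v) ∧
      (∀ a b : V, c ∈ l a → c ∈ l b →
        Relation.ReflTransGen
          (fun x y => c ∈ l x ∧ c ∈ l y ∧
            ((y ≠ r ∧ parent y = x) ∨ (x ≠ r ∧ parent x = y))) a b) ∧
      (∃! v, c ∈ l v ∧ (v = r ∨ c ∉ l (parent v))))
    (hb : ∀ c : C,
      (∀ v, c ∈ l v) ∨
      (c ∉ l r ∧
        ∀ a b : V, c ∉ l a → c ∉ l b →
          Relation.ReflTransGen
            (fun x y => c ∉ l x ∧ c ∉ l y ∧
              ((y ≠ r ∧ parent y = x) ∨ (x ≠ r ∧ parent x = y))) a b)) :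
    ∀ v, v ≠ r → l (parent v) ⊆ l v :=
  stmt19_general r parent hroot l hb
end
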